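/- Let (a_k) and (b_k) be nondecreasing unbounded sequences of positive reals with a_k ≤ b_k for all k. Then there exists a sequence (v_k) of positive integers with v_k dividing v_{k+1} for every k, such that 1 ≤ limsup_{k→∞} a_k / v_k ≤ 2 and 1 ≤ liminf_{k→∞} b_k / v_k ≤ 2. -/

import Mathlib

/-!
Only ever multiply `v` by powers of two, so that `v k ∣ v (k + 1)` is automatic; rounding `v`
down to the largest `v * 2 ^ j ≤ x` puts `x / v` in `[1, 2)`. Wait, keeping `v`, until the
unbounded `a` overtakes it, round `v` to `a k`, at the next step round it to `b`, and repeat.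
Every step rounds against a target between `a k` and `b k`, so `a / v < 2` always and `v` never
exceeds `max 1 b`, whence `b / v ≥ 1` eventually; the rounds to `a` give `a / v ≥ 1`, and those
to `b` give `b / v ≤ 2`, infinitely often.
-/

open Filter

/-- The largest number of the form `V * 2 ^ j` that is at most `x`, or `V` if `x < V`. -/
noncomputable def dyadicFloor (V : ℕ) (x : ℝ) : ℕ := V * 2 ^ Nat.log 2 ⌊x / V⌋₊

section dyadicFloor

variable {V : ℕ} {x : ℝ}

lemma dvd_dyadicFloor (V : ℕ) (x : ℝ) : V ∣ dyadicFloor V x := dvd_mul_right _ _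

lemma dyadicFloor_pos (hV : 0 < V) (x : ℝ) : 0 < dyadicFloor V x :=
  Nat.mul_pos hV (Nat.two_pow_pos _)

lemma dyadicFloor_le (hV : 0 < V) (hx : V ≤ x) : (dyadicFloor V x : ℝ) ≤ x := by
  have hV' : (0 : ℝ) < V := by exact_mod_cast hV
  have hfloor : ⌊x / V⌋₊ ≠ 0 :=
    Nat.one_le_iff_ne_zero.mp (Nat.le_floor (by simpa using (one_le_div hV').2 hx))
  have hpow : (2 ^ Nat.log 2 ⌊x / V⌋₊ : ℝ) ≤ x / V :=
    calc (2 ^ Nat.log 2 ⌊x / V⌋₊ : ℝ) ≤ ⌊x / V⌋₊ := by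
          exact_mod_cast Nat.pow_log_le_self 2 hfloor
      _ ≤ x / V := Nat.floor_le (div_nonneg (hV'.le.trans hx) hV'.le)
  rw [dyadicFloor, Nat.cast_mul, Nat.cast_pow, Nat.cast_ofNat, ← le_div_iff₀' hV']
  exact hpow

lemma lt_two_mul_dyadicFloor (hV : 0 < V) (x : ℝ) : x < 2 * dyadicFloor V x := by
  have hV' : (0 : ℝ) < V := by exact_mod_cast hV
  have hpow : x / V < 2 * 2 ^ Nat.log 2 ⌊x / V⌋₊ :=
    calc x / V < ⌊x / V⌋₊ + 1 := Nat.lt_floor_add_one _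
      _ ≤ (2 ^ (Nat.log 2 ⌊x / V⌋₊ + 1) : ℕ) := by
          exact_mod_cast Nat.lt_pow_succ_log_self one_lt_two _
      _ = 2 * 2 ^ Nat.log 2 ⌊x / V⌋₊ := by push_cast; ring
  rw [div_lt_iff₀ hV'] at hpow
  rw [dyadicFloor, Nat.cast_mul, Nat.cast_pow, Nat.cast_ofNat]
  linarith

lemma dyadicFloor_of_lt (hx : x < V) : dyadicFloor V x = V := by
  rcases V.eq_zero_or_pos with rfl | hV
  · simp [dyadicFloor]
  have hfloor : ⌊x / V⌋₊ = 0 :=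
    Nat.floor_eq_zero.mpr ((div_lt_one (by exact_mod_cast hV)).mpr hx)
  simp [dyadicFloor, hfloor]

lemma dyadicFloor_le_max (hV : 0 < V) (x : ℝ) : (dyadicFloor V x : ℝ) ≤ max (V : ℝ) x := by
  rcases lt_or_ge x V with hx | hx
  · simp [dyadicFloor_of_lt hx]
  · exact (dyadicFloor_le hV hx).trans (le_max_right _ _)

end dyadicFloor

/-- One step of the chase at index `k`, on a state `(v, roundedToA)`: if the previous step
rounded `v` to `a`, round it to `b k`; otherwise round it to `a k` (the identity while `a k < v`)
and record whether that happened. -/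
noncomputable def chaseStep (a b : ℕ → ℝ) (k : ℕ) (s : ℕ × Bool) : ℕ × Bool :=
  if s.2 then (dyadicFloor s.1 (b k), false)
  else (dyadicFloor s.1 (a k), decide ((s.1 : ℝ) ≤ a k))

/-- The state after the steps at indices `0, …, n - 1`; the chasing sequence is
`k ↦ (chaseState a b (k + 1)).1`. -/
noncomputable def chaseState (a b : ℕ → ℝ) : ℕ → ℕ × Bool
  | 0 => (1, false)
  | k + 1 => chaseStep a b k (chaseState a b k)

section chase

variable {a b : ℕ → ℝ} {k : ℕ} {s : ℕ × Bool}

lemma exists_chaseStep_fst_eq (hab : ∀ k, a k ≤ b k) (k : ℕ) (s : ℕ × Bool) :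
    ∃ x ∈ Set.Icc (a k) (b k), (chaseStep a b k s).1 = dyadicFloor s.1 x := by
  unfold chaseStep
  split
  · exact ⟨b k, ⟨hab k, le_rfl⟩, rfl⟩
  · exact ⟨a k, ⟨le_rfl, hab k⟩, rfl⟩

lemma dvd_chaseStep_fst (a b : ℕ → ℝ) (k : ℕ) (s : ℕ × Bool) : s.1 ∣ (chaseStep a b k s).1 := by
  unfold chaseStep
  split <;> exact dvd_dyadicFloor _ _

lemma chaseStep_fst_pos (hpos : 0 < s.1) : 0 < (chaseStep a b k s).1 := by
  unfold chaseStep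
  split <;> exact dyadicFloor_pos hpos _

lemma chaseStep_fst_le (hpos : 0 < s.1) (h : (chaseStep a b k s).2 = true) :
    ((chaseStep a b k s).1 : ℝ) ≤ a k := by
  cases hs : s.2
  · simp only [chaseStep, hs, Bool.false_eq_true, if_false, decide_eq_true_eq] at h ⊢
    exact dyadicFloor_le hpos h
  · simp [chaseStep, hs] at h

lemma lt_two_mul_chaseStep_fst (hpos : 0 < s.1) (hs : s.2 = true) :
    b k < 2 * (chaseStep a b k s).1 := by
  simp only [chaseStep, hs, if_true]
  exact lt_two_mul_dyadicFloor hpos _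

lemma chaseStep_of_snd_eq_false (hs : s.2 = false) (h : (chaseStep a b k s).2 = false) :
    (chaseStep a b k s).1 = s.1 ∧ a k < s.1 := by
  simp only [chaseStep, hs, Bool.false_eq_true, if_false, decide_eq_false_iff_not, not_le] at h ⊢
  exact ⟨dyadicFloor_of_lt h, h⟩

lemma chaseState_fst_pos (a b : ℕ → ℝ) (n : ℕ) : 0 < (chaseState a b n).1 := by
  induction n with
  | zero => exact one_pos
  | succ n ih => exact chaseStep_fst_pos ih

lemma chaseState_fst_dvd_succ (a b : ℕ → ℝ) (n : ℕ) :
    (chaseState a b n).1 ∣ (chaseState a b (n + 1)).1 :=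
  dvd_chaseStep_fst a b n _

lemma a_le_two_mul_chaseState_fst (hab : ∀ k, a k ≤ b k) (k : ℕ) :
    a k ≤ 2 * (chaseState a b (k + 1)).1 := by
  obtain ⟨x, hx, heq⟩ := exists_chaseStep_fst_eq hab k (chaseState a b k)
  rw [chaseState, heq]
  linarith [hx.1, lt_two_mul_dyadicFloor (chaseState_fst_pos a b k) x]

lemma chaseState_fst_le_max (hab : ∀ k, a k ≤ b k) (k : ℕ) :
    ((chaseState a b (k + 1)).1 : ℝ) ≤ max ((chaseState a b k).1 : ℝ) (b k) := by
  obtain ⟨x, hx, heq⟩ := exists_chaseStep_fst_eq hab k (chaseState a b k)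
  rw [chaseState, heq]
  exact (dyadicFloor_le_max (chaseState_fst_pos a b k) x).trans (max_le_max_left _ hx.2)

lemma chaseState_fst_le_max_one (hab : ∀ k, a k ≤ b k) (hb : Monotone b) (k : ℕ) :
    ((chaseState a b (k + 1)).1 : ℝ) ≤ max 1 (b k) := by
  induction k with
  | zero => simpa [chaseState] using chaseState_fst_le_max hab 0
  | succ k ih =>
    calc ((chaseState a b (k + 2)).1 : ℝ) ≤ max ((chaseState a b (k + 1)).1 : ℝ) (b (k + 1)) :=
          chaseState_fst_le_max hab (k + 1)
      _ ≤ max (max 1 (b k)) (b (k + 1)) := max_le_max_right _ ih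
      _ ≤ max 1 (b (k + 1)) := by
          rw [max_assoc, max_eq_right (hb k.le_succ)]

lemma chaseState_fst_le (h : (chaseState a b (k + 1)).2 = true) :
    ((chaseState a b (k + 1)).1 : ℝ) ≤ a k :=
  chaseStep_fst_le (chaseState_fst_pos a b k) h

lemma lt_two_mul_chaseState_fst (h : (chaseState a b (k + 1)).2 = true) :
    b (k + 1) < 2 * (chaseState a b (k + 2)).1 :=
  lt_two_mul_chaseStep_fst (chaseState_fst_pos a b (k + 1)) h

lemma frequently_chaseState_snd (ha : Tendsto a atTop atTop) :
    ∃ᶠ k in atTop, (chaseState a b (k + 1)).2 = true := by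
  intro hev
  obtain ⟨N, hN⟩ := eventually_atTop.1 hev
  simp only [Bool.not_eq_true] at hN
  have hstep (k : ℕ) (hk : N ≤ k) :
      (chaseState a b (k + 2)).1 = (chaseState a b (k + 1)).1 ∧
        a (k + 1) < (chaseState a b (k + 1)).1 :=
    chaseStep_of_snd_eq_false (hN k hk) (hN (k + 1) (by omega))
  have hconst (k : ℕ) (hk : N ≤ k) : (chaseState a b (k + 1)).1 = (chaseState a b (N + 1)).1 := by
    induction k, hk using Nat.le_induction with
    | base => rfl
    | succ k hk ih => rw [(hstep k hk).1, ih]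
  obtain ⟨M, hM⟩ := eventually_atTop.1 (ha.eventually_ge_atTop ((chaseState a b (N + 1)).1 : ℝ))
  have hlt := (hstep (max M N) (le_max_right _ _)).2
  rw [hconst _ (le_max_right _ _)] at hlt
  exact (hM _ (by omega)).not_gt hlt

end chase

lemma one_le_ofReal_div {x y : ℝ} (hy : 0 < y) (h : y ≤ x) : 1 ≤ ENNReal.ofReal (x / y) :=
  ENNReal.one_le_ofReal.2 ((one_le_div hy).2 h)

lemma ofReal_div_le_two {x y : ℝ} (hy : 0 < y) (h : x ≤ 2 * y) : ENNReal.ofReal (x / y) ≤ 2 := by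
  rw [← ENNReal.ofReal_ofNat 2]
  exact ENNReal.ofReal_le_ofReal ((div_le_iff₀ hy).2 h)

theorem stmt2 (a b : ℕ → ℝ) (hbmono : Monotone b)
    (haunb : Tendsto a atTop atTop) (hbunb : Tendsto b atTop atTop)
    (hab : ∀ k, a k ≤ b k) :
    ∃ v : ℕ → ℕ, (∀ k, 0 < v k) ∧ (∀ k, v k ∣ v (k + 1)) ∧
      1 ≤ Filter.limsup (fun k => ENNReal.ofReal (a k / (v k : ℝ))) atTop ∧
      Filter.limsup (fun k => ENNReal.ofReal (a k / (v k : ℝ))) atTop ≤ 2 ∧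
      1 ≤ Filter.liminf (fun k => ENNReal.ofReal (b k / (v k : ℝ))) atTop ∧
      Filter.liminf (fun k => ENNReal.ofReal (b k / (v k : ℝ))) atTop ≤ 2 := by
  set v : ℕ → ℕ := fun k => (chaseState a b (k + 1)).1
  have hv (k : ℕ) : (0 : ℝ) < v k := by exact_mod_cast chaseState_fst_pos a b (k + 1)
  have hfreq := frequently_chaseState_snd (b := b) haunb
  refine ⟨v, fun k => chaseState_fst_pos a b (k + 1), fun k => chaseState_fst_dvd_succ a b (k + 1),
    ?_, ?_, ?_, ?_⟩
  · refine le_limsup_of_frequently_le ?_ (by isBoundedDefault)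
    exact hfreq.mono fun k hk => one_le_ofReal_div (hv k) (chaseState_fst_le hk)
  · refine limsup_le_of_le (by isBoundedDefault) (Eventually.of_forall fun k => ?_)
    exact ofReal_div_le_two (hv k) (a_le_two_mul_chaseState_fst hab k)
  · refine le_liminf_of_le (by isBoundedDefault) ?_
    filter_upwards [hbunb.eventually_ge_atTop 1] with k hk
    refine one_le_ofReal_div (hv k) ?_
    simpa [max_eq_right hk] using chaseState_fst_le_max_one hab hbmono k
  · refine liminf_le_of_frequently_le ?_ (by isBoundedDefault)
    refine (tendsto_add_atTop_nat 1).frequently (hfreq.mono fun k hk => ?_)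
    exact ofReal_div_le_two (hv (k + 1)) (lt_two_mul_chaseState_fst hk).le
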